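/- For every s ∈ [0,1/2] there exists a positive semidefinite matrix Y on ℂ³⊗ℂ³ such that the 18×18 block matrix [[Y, −T_b(J^s)], [−T_b(J^s), Y]] is positive semidefinite and the largest eigenvalue of the partial trace Tr_b(Y) equals 1 + √(1−s). (This exhibits a feasible point of the semidefinite program for the diamond norm of the transposition map composed with N_s, establishing ‖T∘N_s‖_⋄ ≤ 1 + √(1−s) and hence the quantum-capacity bound Q(N_s) ≤ log₂(1 + √(1−s)).) -/

import Mathlib

open Matrix Kronecker ComplexOrder

/-- Partial transpose on the second tensor factor. -/
noncomputable def ptransposeB {m n : ℕ}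
    (M : Matrix (Fin m × Fin n) (Fin m × Fin n) ℂ) :
    Matrix (Fin m × Fin n) (Fin m × Fin n) ℂ :=
  Matrix.of fun p q => M (p.1, q.2) (q.1, p.2)

/-- Partial trace over the second tensor factor. -/
noncomputable def ptraceB {m n : ℕ}
    (M : Matrix (Fin m × Fin n) (Fin m × Fin n) ℂ) :
    Matrix (Fin m) (Fin m) ℂ :=
  Matrix.of fun i k => ∑ j, M (i, j) (k, j)

/-- The largest eigenvalue of a Hermitian matrix (0 if not Hermitian). -/
noncomputable def maxEig {n : ℕ} (M : Matrix (Fin n) (Fin n) ℂ) : ℝ :=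
  if h : M.IsHermitian then ⨆ i, h.eigenvalues i else 0

/-- |ψ₁⟩ = √s |0⟩⊗|0⟩ + |1⟩⊗|2⟩. -/
noncomputable def psi1 (s : ℝ) : Fin 3 × Fin 3 → ℂ := fun p =>
  if p = (0, 0) then (Real.sqrt s : ℂ) else if p = (1, 2) then 1 else 0

/-- |ψ₂⟩ = √(1−s) |0⟩⊗|1⟩ + |2⟩⊗|2⟩. -/
noncomputable def psi2 (s : ℝ) : Fin 3 × Fin 3 → ℂ := fun p =>
  if p = (0, 1) then (Real.sqrt (1 - s) : ℂ) else if p = (2, 2) then 1 else 0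

/-- The unnormalized Choi operator J^s = |ψ₁⟩⟨ψ₁| + |ψ₂⟩⟨ψ₂| of the channel N_s. -/
noncomputable def choiNs (s : ℝ) : Matrix (Fin 3 × Fin 3) (Fin 3 × Fin 3) ℂ :=
  Matrix.vecMulVec (psi1 s) (star (psi1 s)) + Matrix.vecMulVec (psi2 s) (star (psi2 s))

/-!
Write `T_b J^s = Q - P` with `P, Q ⪰ 0` and take `Y = P + Q`: then `Y - T_b J^s = 2P` and
`Y + T_b J^s = 2Q`, which is what positivity of the block matrix amounts to. Off the span of
`|02⟩, |10⟩, |21⟩` the matrix `T_b J^s` is diagonal with nonnegative entries; on it, it is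
`√s (|02⟩⟨10| + h.c.) + √(1-s) (|02⟩⟨21| + h.c.) = c (|v₊⟩⟨v₊| - |v₋⟩⟨v₋|)` with
`v± = √(1-s)|02⟩ ± (√s|10⟩ + √(1-s)|21⟩)` and `c = 1/(2√(1-s))`. Adding `(1-2s)c |12⟩⟨12|`,
nonnegative as `s ≤ 1/2`, to both `P` and `Q` makes `Tr_b Y = (1 + √(1-s)) I`, whose largest
eigenvalue is `1 + √(1-s)`.
-/

lemma maxEig_eq_sSup_spectrum {n : ℕ} {M : Matrix (Fin n) (Fin n) ℂ} (hM : M.IsHermitian) :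
    maxEig M = sSup (spectrum ℝ M) := by
  rw [maxEig, dif_pos hM, hM.spectrum_real_eq_range_eigenvalues]
  rfl

lemma maxEig_smul_one {n : ℕ} [NeZero n] (c : ℝ) :
    maxEig (c • (1 : Matrix (Fin n) (Fin n) ℂ)) = c := by
  rw [maxEig_eq_sSup_spectrum (isHermitian_one.smul (IsSelfAdjoint.all c)),
    ← Algebra.algebraMap_eq_smul_one, spectrum.scalar_eq, csSup_singleton]

section FromBlocks

variable {n R : Type*} [Fintype n] [DecidableEq n] [Ring R] [PartialOrder R] [StarRing R]

lemma fromBlocks_self_posSemidef {P : Matrix n n R} (hP : P.PosSemidef) :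
    (fromBlocks P P P P).PosSemidef := by
  simpa [conjTranspose_fromCols_eq_fromRows_conjTranspose, fromRows_mul, mul_fromCols] using
    hP.conjTranspose_mul_mul_same (fromCols (1 : Matrix n n R) (1 : Matrix n n R))

lemma fromBlocks_neg_posSemidef {P : Matrix n n R} (hP : P.PosSemidef) :
    (fromBlocks P (-P) (-P) P).PosSemidef := by
  simpa [conjTranspose_fromCols_eq_fromRows_conjTranspose, fromRows_mul, mul_fromCols] using
    hP.conjTranspose_mul_mul_same (fromCols (1 : Matrix n n R) (-1 : Matrix n n R))

lemma fromBlocks_add_sub_posSemidef [AddLeftMono R] {P Q : Matrix n n R}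
    (hP : P.PosSemidef) (hQ : Q.PosSemidef) :
    (fromBlocks (P + Q) (Q - P) (Q - P) (P + Q)).PosSemidef := by
  simpa [fromBlocks_add, sub_eq_add_neg, add_comm] using
    (fromBlocks_self_posSemidef hQ).add (fromBlocks_neg_posSemidef hP)

end FromBlocks

noncomputable def ket (i j : Fin 3) : Fin 3 × Fin 3 → ℂ := Pi.single (i, j) 1

noncomputable def proj {n : Type*} (v : n → ℂ) : Matrix n n ℂ := vecMulVec v (star v)

lemma proj_posSemidef {n : Type*} [Fintype n] (v : n → ℂ) : (proj v).PosSemidef :=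
  posSemidef_vecMulVec_self_star v

noncomputable def vPlus (s : ℝ) : Fin 3 × Fin 3 → ℂ :=
  (√(1 - s) : ℂ) • ket 0 2 + (√s : ℂ) • ket 1 0 + (√(1 - s) : ℂ) • ket 2 1

noncomputable def vMinus (s : ℝ) : Fin 3 × Fin 3 → ℂ :=
  (√(1 - s) : ℂ) • ket 0 2 - (√s : ℂ) • ket 1 0 - (√(1 - s) : ℂ) • ket 2 1

noncomputable def choiPTPos (s : ℝ) : Matrix (Fin 3 × Fin 3) (Fin 3 × Fin 3) ℂ :=
  s • proj (ket 0 0) + (1 - s) • proj (ket 0 1) +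
    (1 + (1 - 2 * s) / (2 * √(1 - s))) • proj (ket 1 2) + proj (ket 2 2) +
    (2 * √(1 - s))⁻¹ • proj (vPlus s)

noncomputable def choiPTNeg (s : ℝ) : Matrix (Fin 3 × Fin 3) (Fin 3 × Fin 3) ℂ :=
  ((1 - 2 * s) / (2 * √(1 - s))) • proj (ket 1 2) + (2 * √(1 - s))⁻¹ • proj (vMinus s)

lemma choiPTPos_posSemidef {s : ℝ} (hs0 : 0 ≤ s) (hs2 : s ≤ 1 / 2) :
    (choiPTPos s).PosSemidef := by
  have h1 : 0 ≤ 1 - s := by linarith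
  have h2 : 0 ≤ 1 - 2 * s := by linarith
  exact (((((proj_posSemidef _).smul hs0).add ((proj_posSemidef _).smul h1)).add
    ((proj_posSemidef _).smul (by positivity))).add (proj_posSemidef _)).add
    ((proj_posSemidef _).smul (by positivity))

lemma choiPTNeg_posSemidef {s : ℝ} (hs2 : s ≤ 1 / 2) : (choiPTNeg s).PosSemidef := by
  have h2 : 0 ≤ 1 - 2 * s := by linarith
  exact ((proj_posSemidef _).smul (by positivity)).add ((proj_posSemidef _).smul (by positivity))

set_option maxHeartbeats 400000 in
lemma choiPTPos_sub_choiPTNeg {s : ℝ} (hs0 : 0 ≤ s) (hs1 : s < 1) :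
    choiPTPos s - choiPTNeg s = ptransposeB (choiNs s) := by
  have ha : ((√s : ℝ) : ℂ) * √s = s := by exact_mod_cast Real.mul_self_sqrt hs0
  have hb : ((√(1 - s) : ℝ) : ℂ) * √(1 - s) = 1 - s := by
    exact_mod_cast Real.mul_self_sqrt (sub_nonneg.2 hs1.le)
  have hb0 : ((√(1 - s) : ℝ) : ℂ) ≠ 0 := by exact_mod_cast (Real.sqrt_pos.2 (sub_pos.2 hs1)).ne'
  ext ⟨i, j⟩ ⟨k, l⟩
  fin_cases i <;> fin_cases j <;> fin_cases k <;> fin_cases l <;>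
    simp [choiPTPos, choiPTNeg, proj, vPlus, vMinus, ket, ptransposeB, choiNs, psi1, psi2,
      vecMulVec_apply, Complex.conj_ofReal]
  all_goals first | exact ha.symm | exact hb.symm | (field_simp; ring)

lemma ptraceB_choiPTPos_add_choiPTNeg {s : ℝ} (hs0 : 0 ≤ s) (hs1 : s < 1) :
    ptraceB (choiPTPos s + choiPTNeg s) = (1 + √(1 - s)) • (1 : Matrix (Fin 3) (Fin 3) ℂ) := by
  have ha : ((√s : ℝ) : ℂ) * √s = s := by exact_mod_cast Real.mul_self_sqrt hs0
  have hb : ((√(1 - s) : ℝ) : ℂ) * √(1 - s) = 1 - s := by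
    exact_mod_cast Real.mul_self_sqrt (sub_nonneg.2 hs1.le)
  have hb0 : ((√(1 - s) : ℝ) : ℂ) ≠ 0 := by exact_mod_cast (Real.sqrt_pos.2 (sub_pos.2 hs1)).ne'
  ext i k
  fin_cases i <;> fin_cases k <;>
    simp [ptraceB, choiPTPos, choiPTNeg, proj, vPlus, vMinus, ket, Fin.sum_univ_three,
      vecMulVec_apply, one_apply]
  all_goals field_simp
  all_goals first | linear_combination 2 * ha - 2 * hb | ring

theorem stmt1 (s : ℝ) (hs : s ∈ Set.Icc (0 : ℝ) (1/2)) :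
    ∃ Y : Matrix (Fin 3 × Fin 3) (Fin 3 × Fin 3) ℂ,
      Y.PosSemidef ∧
      (Matrix.fromBlocks Y (-(ptransposeB (choiNs s)))
        (-(ptransposeB (choiNs s))) Y).PosSemidef ∧
      maxEig (ptraceB Y) = 1 + Real.sqrt (1 - s) := by
  obtain ⟨hs0, hs2⟩ := hs
  have hs1 : s < 1 := by linarith
  have hPos := choiPTPos_posSemidef hs0 hs2
  have hNeg := choiPTNeg_posSemidef hs2
  refine ⟨choiPTPos s + choiPTNeg s, hPos.add hNeg, ?_, ?_⟩
  · rw [← choiPTPos_sub_choiPTNeg hs0 hs1, neg_sub]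
    exact fromBlocks_add_sub_posSemidef hPos hNeg
  · rw [ptraceB_choiPTPos_add_choiPTNeg hs0 hs1, maxEig_smul_one]
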